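/- arXiv:1406.6445 — 2 statements merged into one kernel-verified Lean document; each statement's English description precedes it below -/
import Mathlib

section
/- Let E be a finite field with |E| = 8 and let V = E³ be regarded as a vector space over the prime field 𝔽₂ by restriction of scalars. Let O be the pseudo-hyperconic, i.e. the set of 𝔽₂-subspaces of V underlying the hyperconic of PG(2,8): O consists of the E-spans E·(1,t,t²) for t ∈ E together with E·(0,1,0) and E·(0,0,1), each regarded as an 𝔽₂-subspace of V. Then the stabiliser of O in the group of 𝔽₂-linear automorphisms of V is not transitive on O: there exist U, U' ∈ O such that no 𝔽₂-linear automorphism g of V satisfies both (Submodule.map g U'' ∈ O for every U'' ∈ O) and Submodule.map g U = U'. -/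
set_option linter.unusedSectionVars false

/-- The pseudo-hyperconic: the set of `𝔽₂`-subspaces of `V = E³` underlying the hyperconic
(regular hyperoval) `{E·(1,t,t²) : t ∈ E} ∪ {E·(0,1,0), E·(0,0,1)}` of `PG(2,E)`. -/
def pseudoHyperconic (E : Type*) [Field E] [Algebra (ZMod 2) E] :
    Set (Submodule (ZMod 2) (Fin 3 → E)) :=
  {W | (∃ t : E, W = (Submodule.span E
          ({![1, t, t ^ 2]} : Set (Fin 3 → E))).restrictScalars (ZMod 2)) ∨
    W = (Submodule.span E ({![0, 1, 0]} : Set (Fin 3 → E))).restrictScalars (ZMod 2) ∨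
    W = (Submodule.span E ({![0, 0, 1]} : Set (Fin 3 → E))).restrictScalars (ZMod 2)}

namespace PseudoHC

variable {E : Type*} [Field E] [Fintype E] [Algebra (ZMod 2) E]

/-- The conic member with parameter `t`. -/
def Pm (t : E) : Submodule (ZMod 2) (Fin 3 → E) :=
  (Submodule.span E ({![1, t, t ^ 2]} : Set (Fin 3 → E))).restrictScalars (ZMod 2)

/-- The nucleus member. -/
def Nm : Submodule (ZMod 2) (Fin 3 → E) :=
  (Submodule.span E ({![0, 1, 0]} : Set (Fin 3 → E))).restrictScalars (ZMod 2)

/-- The conic point at infinity. -/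
def Zm : Submodule (ZMod 2) (Fin 3 → E) :=
  (Submodule.span E ({![0, 0, 1]} : Set (Fin 3 → E))).restrictScalars (ZMod 2)

lemma mem_O_iff (W : Submodule (ZMod 2) (Fin 3 → E)) :
    W ∈ pseudoHyperconic E ↔ (∃ t : E, W = Pm t) ∨ W = Nm ∨ W = Zm := Iff.rfl

lemma mem_Pm (t : E) (v : Fin 3 → E) : v ∈ Pm t ↔ ∃ c : E, c • ![1, t, t ^ 2] = v := by
  simp [Pm, Submodule.restrictScalars_mem, Submodule.mem_span_singleton]

lemma mem_Nm (v : Fin 3 → E) : v ∈ (Nm : Submodule (ZMod 2) (Fin 3 → E)) ↔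
    ∃ c : E, c • ![0, 1, 0] = v := by
  simp [Nm, Submodule.restrictScalars_mem, Submodule.mem_span_singleton]

lemma mem_Zm (v : Fin 3 → E) : v ∈ (Zm : Submodule (ZMod 2) (Fin 3 → E)) ↔
    ∃ c : E, c • ![0, 0, 1] = v := by
  simp [Zm, Submodule.restrictScalars_mem, Submodule.mem_span_singleton]

-- vector helpers
lemma vec_ext {v w : Fin 3 → E} (h0 : v 0 = w 0) (h1 : v 1 = w 1) (h2 : v 2 = w 2) : v = w := by
  funext i; fin_cases i <;> assumption

@[simp] lemma smul_vec (c a b d : E) : c • ![a, b, d] = ![c * a, c * b, c * d] := by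
  apply vec_ext <;> simp

@[simp] lemma add_vec (a b d a' b' d' : E) :
    ![a, b, d] + ![a', b', d'] = ![a + a', b + b', d + d'] := by
  apply vec_ext <;> simp

lemma vec_eta (v : Fin 3 → E) : v = ![v 0, v 1, v 2] := by apply vec_ext <;> simp

lemma Pm_mem_O (t : E) : (Pm t : Submodule (ZMod 2) (Fin 3 → E)) ∈ pseudoHyperconic E :=
  Or.inl ⟨t, rfl⟩

lemma Nm_mem_O : (Nm : Submodule (ZMod 2) (Fin 3 → E)) ∈ pseudoHyperconic E :=
  Or.inr (Or.inl rfl)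

lemma Zm_mem_O : (Zm : Submodule (ZMod 2) (Fin 3 → E)) ∈ pseudoHyperconic E :=
  Or.inr (Or.inr rfl)

/-- Members of the pseudo-hyperconic are closed under `E`-scalar multiplication. -/
lemma smul_mem_of_mem_O {W : Submodule (ZMod 2) (Fin 3 → E)} (hW : W ∈ pseudoHyperconic E)
    (t : E) {v : Fin 3 → E} (hv : v ∈ W) : t • v ∈ W := by
  rcases hW with ⟨s, rfl⟩ | rfl | rfl <;>
  · rw [Submodule.restrictScalars_mem] at hv ⊢
    exact Submodule.smul_mem _ t hv

lemma O_finite : (pseudoHyperconic E).Finite := by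
  have : pseudoHyperconic E ⊆ (Set.range fun t : E => Pm t) ∪ {Nm, Zm} := by
    rintro W (⟨t, rfl⟩ | rfl | rfl)
    · exact Or.inl ⟨t, rfl⟩
    · exact Or.inr (Or.inl rfl)
    · exact Or.inr (Or.inr rfl)
  exact Set.Finite.subset ((Set.finite_range _).union ((Set.finite_singleton Zm).insert Nm)) this

/-- Generic lemma: if a `ZMod 2`-linear equivalence maps `c • p` to `ψ c • q` for a
bijective `ψ`, then it maps the member spanned by `p` to the member spanned by `q`. -/
lemma map_member (G : (Fin 3 → E) ≃ₗ[ZMod 2] (Fin 3 → E)) (p q : Fin 3 → E)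
    (ψ : E → E) (hψ : Function.Bijective ψ)
    (hG : ∀ c : E, G (c • p) = ψ c • q) :
    Submodule.map G.toLinearMap ((Submodule.span E ({p} : Set (Fin 3 → E))).restrictScalars (ZMod 2))
      = (Submodule.span E ({q} : Set (Fin 3 → E))).restrictScalars (ZMod 2) := by
  ext v
  rw [Submodule.mem_map]
  constructor
  · rintro ⟨w, hw, rfl⟩
    rw [Submodule.restrictScalars_mem, Submodule.mem_span_singleton] at hw ⊢
    rcases hw with ⟨c, rfl⟩
    exact ⟨ψ c, (hG c).symm⟩
  · intro hv
    rw [Submodule.restrictScalars_mem, Submodule.mem_span_singleton] at hv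
    rcases hv with ⟨d, rfl⟩
    rcases hψ.surjective d with ⟨c, rfl⟩
    refine ⟨c • p, ?_, hG c⟩
    rw [Submodule.restrictScalars_mem, Submodule.mem_span_singleton]
    exact ⟨c, rfl⟩

/-- Any additive map preserving every member of the pseudo-hyperconic is an `E`-scalar
multiplication. -/
lemma exists_scalar (h : (Fin 3 → E) → (Fin 3 → E))
    (hadd : ∀ u v, h (u + v) = h u + h v)
    (hstab : ∀ W ∈ pseudoHyperconic E, ∀ v ∈ W, h v ∈ W) :
    ∃ lam : E, ∀ v, h v = lam • v := by
  have hP : ∀ (t c : E), h (c • ![1, t, t ^ 2]) ∈ Pm t := by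
    intro t c
    refine hstab _ (Pm_mem_O t) _ ?_
    rw [mem_Pm]; exact ⟨c, rfl⟩
  -- component functions
  have hN : ∀ c : E, ∃ d : E, h ![(0:E), c, 0] = ![0, d, 0] := by
    intro c
    have := hstab _ Nm_mem_O ![(0:E), c, 0] (by rw [mem_Nm]; exact ⟨c, by simp⟩)
    rw [mem_Nm] at this
    rcases this with ⟨d, hd⟩
    exact ⟨d, by rw [← hd]; simp⟩
  have hZ : ∀ c : E, ∃ d : E, h ![(0:E), 0, c] = ![0, 0, d] := by
    intro c
    have := hstab _ Zm_mem_O ![(0:E), 0, c] (by rw [mem_Zm]; exact ⟨c, by simp⟩)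
    rw [mem_Zm] at this
    rcases this with ⟨d, hd⟩
    exact ⟨d, by rw [← hd]; simp⟩
  have h0 : ∀ c : E, ∃ d : E, h ![c, 0, 0] = ![d, 0, 0] := by
    intro c
    have h00 : (0:E) = 0 ^ 2 := by ring
    have := hstab _ (Pm_mem_O 0) ![c, 0, 0] (by rw [mem_Pm]; exact ⟨c, by simp⟩)
    rw [mem_Pm] at this
    rcases this with ⟨d, hd⟩
    exact ⟨d, by rw [← hd]; simp⟩
  -- the key relation coming from the conic members
  have key : ∀ (t c : E), ∃ d : E,
      h ![c, 0, 0] = ![d, 0, 0] ∧ h ![(0:E), c * t, 0] = ![0, d * t, 0] ∧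
        h ![(0:E), 0, c * t ^ 2] = ![0, 0, d * t ^ 2] := by
    intro t c
    have hdecomp : (c • ![1, t, t ^ 2] : Fin 3 → E)
        = ![c, 0, 0] + ![0, c * t, 0] + ![0, 0, c * t ^ 2] := by
      apply vec_ext <;> simp
    have hmem := hP t c
    rw [hdecomp, hadd, hadd] at hmem
    rcases h0 c with ⟨d0, hd0⟩
    rcases hN (c * t) with ⟨d1, hd1⟩
    rcases hZ (c * t ^ 2) with ⟨d2, hd2⟩
    rw [hd0, hd1, hd2, mem_Pm] at hmem
    rcases hmem with ⟨μ, hμ⟩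
    have e0 : μ = d0 := by
      have := congrFun hμ 0; simpa using this
    have e1 : d1 = μ * t := by
      have := congrFun hμ 1; simpa using this.symm
    have e2 : d2 = μ * t ^ 2 := by
      have := congrFun hμ 2; simpa using this.symm
    subst e0
    exact ⟨μ, hd0, by rw [hd1, e1], by rw [hd2, e2]⟩
  -- identify the three component functions
  obtain ⟨lam, hlam, _, _⟩ := key 1 1
  refine ⟨lam, ?_⟩
  have hc0 : ∀ c : E, h ![c, 0, 0] = ![lam * c, 0, 0] := by
    intro c
    obtain ⟨d, hd, hd1, _⟩ := key 1 c
    obtain ⟨d', hd', hd1', _⟩ := key c 1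
    have hdl : d' = lam := by
      have := congrFun (hd'.symm.trans hlam) 0; simpa using this
    have h1 : h ![(0:E), c, 0] = ![0, d, 0] := by simpa using hd1
    have h2 : h ![(0:E), c, 0] = ![0, lam * c, 0] := by
      rw [hdl] at hd1'; simpa using hd1'
    have hdc : d = lam * c := by
      have := congrFun (h1.symm.trans h2) 1; simpa using this
    rw [hd, hdc]
  have hc1 : ∀ c : E, h ![(0:E), c, 0] = ![0, lam * c, 0] := by
    intro c
    obtain ⟨d, hd, hd1, _⟩ := key 1 c
    have hdc : d = lam * c := by
      have := congrFun (hd.symm.trans (hc0 c)) 0; simpa using this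
    have h1 : h ![(0:E), c, 0] = ![0, d, 0] := by simpa using hd1
    rw [h1, hdc]
  have hc2 : ∀ c : E, h ![(0:E), 0, c] = ![0, 0, lam * c] := by
    intro c
    obtain ⟨d, hd, _, hd2⟩ := key 1 c
    have hdc : d = lam * c := by
      have := congrFun (hd.symm.trans (hc0 c)) 0; simpa using this
    have h1 : h ![(0:E), 0, c] = ![0, 0, d] := by simpa using hd2
    rw [h1, hdc]
  intro v
  have hv : v = ![v 0, 0, 0] + ![0, v 1, 0] + ![0, 0, v 2] := by
    apply vec_ext <;> simp
  rw [hv, hadd, hadd, hc0, hc1, hc2]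
  apply vec_ext <;> simp

section sums
variable (hE : Fintype.card E = 8)
include hE

lemma exists_x : ∃ x : E, x ≠ 0 ∧ x ≠ 1 := by
  classical
  by_contra hcon
  push_neg at hcon
  have hsub : (Finset.univ : Finset E) ⊆ ({0, 1} : Finset E) := by
    intro x _
    rcases eq_or_ne x 0 with h | h
    · simp [h]
    · simp [hcon x h]
  have h1 := Finset.card_le_card hsub
  have h2 : ({0, 1} : Finset E).card ≤ 2 := Finset.card_insert_le _ _ |>.trans (by simp)
  rw [Finset.card_univ, hE] at h1
  omega

lemma sum_pow_self (x : E) (hx : x ≠ 0) (j : ℕ) :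
    ∑ t : E, t ^ j = x ^ j * ∑ t : E, t ^ j := by
  have hbij : Function.Bijective (fun t : E => x * t) := mulLeft_bijective₀ x hx
  have h1 : ∑ t : E, (x * t) ^ j = ∑ t : E, t ^ j :=
    Fintype.sum_bijective _ hbij _ _ (fun t => rfl)
  calc ∑ t : E, t ^ j = ∑ t : E, (x * t) ^ j := h1.symm
    _ = ∑ t : E, x ^ j * t ^ j := by simp [mul_pow]
    _ = x ^ j * ∑ t : E, t ^ j := (Finset.mul_sum _ _ _).symm

lemma sum_pow_eq_zero {j : ℕ} {x : E} (hx : x ≠ 0) (hxj : x ^ j ≠ 1) :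
    ∑ t : E, t ^ j = 0 := by
  have h := sum_pow_self hE x hx j
  have h2 : (x ^ j - 1) * ∑ t : E, t ^ j = 0 := by linear_combination -h
  rcases mul_eq_zero.mp h2 with h3 | h3
  · exact absurd (sub_eq_zero.mp h3) hxj
  · exact h3

lemma sum_pow_three : ∑ t : E, t ^ 3 = 0 := by
  obtain ⟨x, hx0, hx1⟩ := exists_x hE
  have hx8 : x ^ 8 = x := by
    have := FiniteField.pow_card x
    rwa [hE] at this
  refine sum_pow_eq_zero hE hx0 ?_
  intro h3
  have h2 : x ^ 2 = x := by
    calc x ^ 2 = (x ^ 3) ^ 2 * x ^ 2 := by rw [h3]; ring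
      _ = x ^ 8 := by ring
      _ = x := hx8
  have : x * (x - 1) = 0 := by linear_combination h2
  rcases mul_eq_zero.mp this with h | h
  · exact hx0 h
  · exact hx1 (sub_eq_zero.mp h)

lemma sum_pow_four : ∑ t : E, t ^ 4 = 0 := by
  obtain ⟨x, hx0, hx1⟩ := exists_x hE
  have hx8 : x ^ 8 = x := by
    have := FiniteField.pow_card x
    rwa [hE] at this
  refine sum_pow_eq_zero hE hx0 ?_
  intro h4
  apply hx1
  calc x = x ^ 8 := hx8.symm
    _ = (x ^ 4) ^ 2 := by ring
    _ = 1 := by rw [h4]; exact one_pow 2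

lemma sum_pow_seven : ∑ t : E, t ^ 7 = 1 := by
  classical
  have h2 : (2 : E) = 0 := by
    haveI : CharP E 2 := charP_of_injective_ringHom (algebraMap (ZMod 2) E).injective 2
    exact CharTwo.two_eq_zero
  have hsplit : ∑ t : E, t ^ 7 = ∑ t ∈ Finset.univ.erase (0:E), t ^ 7 := by
    rw [← Finset.add_sum_erase _ _ (Finset.mem_univ (0:E))]
    simp
  rw [hsplit]
  have hone : ∀ t ∈ Finset.univ.erase (0:E), t ^ 7 = 1 := by
    intro t ht
    have ht0 : t ≠ 0 := Finset.ne_of_mem_erase ht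
    have := FiniteField.pow_card_sub_one_eq_one t ht0
    rwa [hE] at this
  rw [Finset.sum_congr rfl hone]
  rw [Finset.sum_const, Finset.card_erase_of_mem (Finset.mem_univ _), Finset.card_univ, hE]
  show ((8 - 1 : ℕ) : ℕ) • (1 : E) = 1
  rw [nsmul_eq_mul, mul_one]
  have : ((7 : ℕ) : E) = 2 * 3 + 1 := by push_cast; ring
  rw [show ((8:ℕ) - 1) = 7 from rfl, this, h2]
  ring

end sums

lemma zmod2_cases (c : ZMod 2) : c = 0 ∨ c = 1 := by
  have h : ∀ c : ZMod 2, c = 0 ∨ c = 1 := by decide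
  exact h c

/-- The `ZMod 2`-linear equivalence of `E³` obtained by applying a ring automorphism
componentwise. -/
def compEquiv (ψ : E ≃+* E) : (Fin 3 → E) ≃ₗ[ZMod 2] (Fin 3 → E) where
  toFun v := fun i => ψ (v i)
  invFun v := fun i => ψ.symm (v i)
  left_inv v := by funext i; simp
  right_inv v := by funext i; simp
  map_add' u v := by funext i; simp
  map_smul' c v := by
    rcases zmod2_cases c with rfl | rfl <;> funext i <;> simp

@[simp] lemma compEquiv_apply (ψ : E ≃+* E) (v : Fin 3 → E) (i : Fin 3) :
    compEquiv ψ v i = ψ (v i) := rfl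

lemma map_compEquiv_Pm (ψ : E ≃+* E) (t : E) :
    Submodule.map (compEquiv ψ).toLinearMap (Pm t) = Pm (ψ t) := by
  apply map_member _ _ _ ψ ψ.bijective
  intro c
  apply vec_ext <;> simp [map_mul, map_pow]

lemma map_compEquiv_Nm (ψ : E ≃+* E) :
    Submodule.map (compEquiv ψ).toLinearMap (Nm : Submodule (ZMod 2) (Fin 3 → E)) = Nm := by
  apply map_member _ _ _ ψ ψ.bijective
  intro c
  apply vec_ext <;> simp

lemma map_compEquiv_Zm (ψ : E ≃+* E) :
    Submodule.map (compEquiv ψ).toLinearMap (Zm : Submodule (ZMod 2) (Fin 3 → E)) = Zm := by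
  apply map_member _ _ _ ψ ψ.bijective
  intro c
  apply vec_ext <;> simp

lemma map_compEquiv_mem_O (ψ : E ≃+* E) {W : Submodule (ZMod 2) (Fin 3 → E)}
    (hW : W ∈ pseudoHyperconic E) :
    Submodule.map (compEquiv ψ).toLinearMap W ∈ pseudoHyperconic E := by
  rcases hW with ⟨t, rfl⟩ | rfl | rfl
  · rw [show (Submodule.span E ({![1, t, t^2]} : Set (Fin 3 → E))).restrictScalars (ZMod 2) = Pm t from rfl,
      map_compEquiv_Pm]
    exact Pm_mem_O _
  · rw [show (Submodule.span E ({![0, 1, 0]} : Set (Fin 3 → E))).restrictScalars (ZMod 2) = Nm from rfl,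
      map_compEquiv_Nm]
    exact Nm_mem_O
  · rw [show (Submodule.span E ({![0, 0, 1]} : Set (Fin 3 → E))).restrictScalars (ZMod 2) = Zm from rfl,
      map_compEquiv_Zm]
    exact Zm_mem_O

section hEquiv
variable (hch : (2 : E) = 0)

/-- An explicit `E`-linear map stabilising the hyperconic, sending `Z` to `P s` and fixing `N`
(it corresponds to the Möbius transformation `t ↦ s + t⁻¹`). -/
def hEquiv (s : E) : (Fin 3 → E) ≃ₗ[ZMod 2] (Fin 3 → E) where
  toFun v := ![v 2, s * v 2 + v 1, s ^ 2 * v 2 + v 0]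
  invFun w := ![s ^ 2 * w 0 + w 2, s * w 0 + w 1, w 0]
  left_inv v := by
    apply vec_ext
    · simp; linear_combination (s ^ 2 * v 2) * hch
    · simp; linear_combination (s * v 2) * hch
    · simp
  right_inv w := by
    apply vec_ext
    · simp
    · simp; linear_combination (s * w 0) * hch
    · simp; linear_combination (s ^ 2 * w 0) * hch
  map_add' u v := by apply vec_ext <;> simp <;> ring
  map_smul' c v := by
    rcases zmod2_cases c with rfl | rfl <;> apply vec_ext <;> simp

lemma hEquiv_linear (s t : E) (v : Fin 3 → E) :
    hEquiv hch s (t • v) = t • hEquiv hch s v := by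
  apply vec_ext <;> simp [hEquiv] <;> ring

lemma map_hEquiv_Nm (s : E) :
    Submodule.map (hEquiv hch s).toLinearMap (Nm : Submodule (ZMod 2) (Fin 3 → E)) = Nm := by
  apply map_member _ _ _ id Function.bijective_id
  intro c
  apply vec_ext <;> simp [hEquiv]

lemma map_hEquiv_Zm (s : E) :
    Submodule.map (hEquiv hch s).toLinearMap (Zm : Submodule (ZMod 2) (Fin 3 → E)) = Pm s := by
  apply map_member _ _ _ id Function.bijective_id
  intro c
  apply vec_ext <;> simp [hEquiv] <;> ring

lemma map_hEquiv_Pm_zero (s : E) :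
    Submodule.map (hEquiv hch s).toLinearMap (Pm (0 : E)) = Zm := by
  apply map_member _ _ _ id Function.bijective_id
  intro c
  apply vec_ext <;> simp [hEquiv]

lemma map_hEquiv_Pm (s : E) {t : E} (ht : t ≠ 0) :
    Submodule.map (hEquiv hch s).toLinearMap (Pm t) = Pm (s + t⁻¹) := by
  apply map_member _ _ _ (fun c => c * t ^ 2) (mulRight_bijective₀ _ (pow_ne_zero 2 ht))
  intro c
  apply vec_ext
  · simp [hEquiv]
  · simp [hEquiv]; field_simp
  · simp [hEquiv]
    field_simp
    ring_nf
    linear_combination (-(s * c * t)) * hch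

lemma map_hEquiv_mem_O (s : E) {W : Submodule (ZMod 2) (Fin 3 → E)}
    (hW : W ∈ pseudoHyperconic E) :
    Submodule.map (hEquiv hch s).toLinearMap W ∈ pseudoHyperconic E := by
  rcases hW with ⟨t, rfl⟩ | rfl | rfl
  · rcases eq_or_ne t 0 with rfl | ht
    · rw [show (Submodule.span E ({![1, (0:E), 0^2]} : Set (Fin 3 → E))).restrictScalars (ZMod 2) = Pm 0 from rfl,
        map_hEquiv_Pm_zero hch s]
      exact Zm_mem_O
    · rw [show (Submodule.span E ({![1, t, t^2]} : Set (Fin 3 → E))).restrictScalars (ZMod 2) = Pm t from rfl,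
        map_hEquiv_Pm hch s ht]
      exact Pm_mem_O _
  · rw [show (Submodule.span E ({![0, 1, 0]} : Set (Fin 3 → E))).restrictScalars (ZMod 2) = Nm from rfl,
      map_hEquiv_Nm]
    exact Nm_mem_O
  · rw [show (Submodule.span E ({![0, 0, 1]} : Set (Fin 3 → E))).restrictScalars (ZMod 2) = Zm from rfl,
      map_hEquiv_Zm]
    exact Pm_mem_O _

end hEquiv

end PseudoHC

open PseudoHC in
/-- **Proposition (case `|E| = 8`).** The stabiliser of the pseudo-hyperconic of
`PG(8,2)` (obtained by field reduction of the hyperconic of `PG(2,8)`) in the group of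
`𝔽₂`-linear automorphisms of `E³` is *not* transitive on the pseudo-hyperconic. -/
theorem pseudoHyperconic_card_eight_not_transitive
    {E : Type*} [Field E] [Fintype E] [Algebra (ZMod 2) E]
    (hE : Fintype.card E = 8) :
    ∃ U ∈ pseudoHyperconic E, ∃ U' ∈ pseudoHyperconic E,
      ¬ ∃ g : (Fin 3 → E) ≃ₗ[ZMod 2] (Fin 3 → E),
        (∀ U'' ∈ pseudoHyperconic E,
          Submodule.map g.toLinearMap U'' ∈ pseudoHyperconic E) ∧
        Submodule.map g.toLinearMap U = U' := by
  classical
  haveI : CharP E 2 := charP_of_injective_ringHom (algebraMap (ZMod 2) E).injective 2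
  have hch : (2 : E) = 0 := CharTwo.two_eq_zero
  refine ⟨Nm, Nm_mem_O, Zm, Zm_mem_O, ?_⟩
  rintro ⟨g, hstab, hmapN⟩
  -- basic distinctness facts
  have hNZ : (Nm : Submodule (ZMod 2) (Fin 3 → E)) ≠ Zm := by
    intro h
    have h1 : (![0,1,0] : Fin 3 → E) ∈ Nm := by rw [mem_Nm]; exact ⟨1, by simp⟩
    rw [h, mem_Zm] at h1
    rcases h1 with ⟨c, hc⟩
    have := congrFun hc 1
    simp at this
  have hPZ : ∀ t : E, (Pm t : Submodule (ZMod 2) (Fin 3 → E)) ≠ Zm := by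
    intro t h
    have h1 : (![1,t,t^2] : Fin 3 → E) ∈ Pm t := by rw [mem_Pm]; exact ⟨1, by simp⟩
    rw [h, mem_Zm] at h1
    rcases h1 with ⟨c, hc⟩
    have := congrFun hc 0
    simp at this
  -- bijectivity of stabilising equivalences on the hyperconic
  have bijO : ∀ (G : (Fin 3 → E) ≃ₗ[ZMod 2] (Fin 3 → E)),
      Set.MapsTo (Submodule.map G.toLinearMap) (pseudoHyperconic E) (pseudoHyperconic E) →
      Set.BijOn (Submodule.map G.toLinearMap) (pseudoHyperconic E) (pseudoHyperconic E) := by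
    intro G hm
    refine (O_finite.injOn_iff_bijOn_of_mapsTo hm).mp ?_
    exact (Submodule.map_injective_of_injective G.injective).injOn
  -- Step 1: every "conjugated scalar" map preserves every member, so it is a scalar.
  have hgsurj := (bijO g hstab).surjOn
  have hφ : ∀ t : E, ∃ lam : E, ∀ v, g (t • g.symm v) = lam • v := by
    intro t
    apply exists_scalar
    · intro u v
      rw [map_add, smul_add, map_add]
    · intro W hW v hv
      obtain ⟨W', hW', hWW'⟩ := hgsurj hW
      have hvW' : g.symm v ∈ W' := by
        rw [← hWW'] at hv
        rcases Submodule.mem_map.mp hv with ⟨w, hw, rfl⟩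
        rwa [LinearEquiv.coe_coe, g.symm_apply_apply]
      have h2 : t • g.symm v ∈ W' := smul_mem_of_mem_O hW' t hvW'
      have : g (t • g.symm v) ∈ Submodule.map g.toLinearMap W' :=
        Submodule.mem_map_of_mem h2
      rwa [hWW'] at this
  choose φ₀ hφ₀ using hφ
  have hsemi : ∀ (t : E) v, g (t • v) = φ₀ t • g v := by
    intro t v
    have := hφ₀ t (g v)
    rwa [g.symm_apply_apply] at this
  -- φ₀ is a ring homomorphism
  have hext : ∀ lam lam' : E, lam • (![1,0,0] : Fin 3 → E) = lam' • ![1,0,0] → lam = lam' := by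
    intro lam lam' h
    have := congrFun h 0
    simpa using this
  have hφadd : ∀ t s : E, φ₀ (t + s) = φ₀ t + φ₀ s := by
    intro t s
    apply hext
    have h1 := hφ₀ (t + s) ![1,0,0]
    have h2 := hφ₀ t ![1,0,0]
    have h3 := hφ₀ s ![1,0,0]
    rw [← h1, add_smul, map_add, h2, h3, add_smul]
  have hφmul : ∀ t s : E, φ₀ (t * s) = φ₀ t * φ₀ s := by
    intro t s
    apply hext
    calc φ₀ (t * s) • (![1,0,0] : Fin 3 → E)
        = g ((t * s) • g.symm ![1,0,0]) := (hφ₀ (t * s) _).symm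
      _ = g (t • g.symm (g (s • g.symm ![1,0,0]))) := by rw [g.symm_apply_apply, mul_smul]
      _ = φ₀ t • (g (s • g.symm ![1,0,0])) := hφ₀ t _
      _ = φ₀ t • (φ₀ s • (![1,0,0] : Fin 3 → E)) := by rw [hφ₀ s]
      _ = (φ₀ t * φ₀ s) • (![1,0,0] : Fin 3 → E) := (mul_smul _ _ _).symm
  have hφone : φ₀ 1 = 1 := by
    apply hext
    rw [← hφ₀ 1 ![1,0,0], one_smul, one_smul, g.apply_symm_apply]
  have hφzero : φ₀ 0 = 0 := by
    apply hext
    rw [← hφ₀ 0 ![1,0,0], zero_smul, zero_smul, map_zero]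
  -- package φ₀ as a ring isomorphism
  let φRH : E →+* E :=
    { toFun := φ₀, map_one' := hφone, map_mul' := hφmul, map_zero' := hφzero,
      map_add' := hφadd }
  have hφbij : Function.Bijective φRH := Finite.injective_iff_bijective.mp φRH.injective
  let φe : E ≃+* E := RingEquiv.ofBijective φRH hφbij
  have hφe : ∀ t : E, φe t = φ₀ t := fun _ => rfl
  -- map composition helper
  have map_trans : ∀ (e₁ e₂ : (Fin 3 → E) ≃ₗ[ZMod 2] (Fin 3 → E))
      (W : Submodule (ZMod 2) (Fin 3 → E)),
      Submodule.map (e₁.trans e₂).toLinearMap W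
        = Submodule.map e₂.toLinearMap (Submodule.map e₁.toLinearMap W) := by
    intro e₁ e₂ W
    rw [← Submodule.map_comp]
    rfl
  -- Step 2: correct g by the componentwise automorphism to get an E-linear gE
  set gE : (Fin 3 → E) ≃ₗ[ZMod 2] (Fin 3 → E) := g.trans (compEquiv φe.symm) with hgE
  have hlinE : ∀ (t : E) (v : Fin 3 → E), gE (t • v) = t • gE v := by
    intro t v
    show compEquiv φe.symm (g (t • v)) = t • compEquiv φe.symm (g v)
    rw [hsemi t v]
    funext i
    simp only [compEquiv_apply, Pi.smul_apply, smul_eq_mul, map_mul]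
    rw [← hφe t, φe.symm_apply_apply]
  have hmapsE : Set.MapsTo (Submodule.map gE.toLinearMap)
      (pseudoHyperconic E) (pseudoHyperconic E) := by
    intro W hW
    rw [hgE, map_trans]
    exact map_compEquiv_mem_O φe.symm (hstab W hW)
  have hmapEN : Submodule.map gE.toLinearMap (Nm : Submodule (ZMod 2) (Fin 3 → E)) = Zm := by
    rw [hgE, map_trans, hmapN]
    exact map_compEquiv_Zm φe.symm
  -- Step 3: find the member τ sent to Nm, and move it to Zm by an explicit stabiliser
  obtain ⟨τ, hτO, hτ⟩ := (bijO gE hmapsE).surjOn Nm_mem_O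
  obtain ⟨hc, hcMaps, hcZ, hcN, hcLin⟩ : ∃ hc : (Fin 3 → E) ≃ₗ[ZMod 2] (Fin 3 → E),
      Set.MapsTo (Submodule.map hc.toLinearMap) (pseudoHyperconic E) (pseudoHyperconic E) ∧
      Submodule.map hc.toLinearMap (Zm : Submodule (ZMod 2) (Fin 3 → E)) = τ ∧
      Submodule.map hc.toLinearMap (Nm : Submodule (ZMod 2) (Fin 3 → E)) = Nm ∧
      ∀ (t : E) (v : Fin 3 → E), hc (t • v) = t • hc v := by
    rcases hτO with ⟨sp, hsp⟩ | hsp | hsp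
    · have hsp' : τ = Pm sp := hsp
      refine ⟨hEquiv hch sp, fun _ hW => map_hEquiv_mem_O hch sp hW, ?_,
        map_hEquiv_Nm hch sp, hEquiv_linear hch sp⟩
      rw [hsp', map_hEquiv_Zm]
    · -- τ = Nm is impossible since gE sends Nm to Zm
      exfalso
      have hsp' : τ = Nm := hsp
      rw [hsp', hmapEN] at hτ
      exact hNZ hτ.symm
    · have hsp' : τ = Zm := hsp
      refine ⟨LinearEquiv.refl (ZMod 2) (Fin 3 → E), ?_, ?_, ?_, fun t v => rfl⟩
      · intro W hW
        rwa [show (LinearEquiv.refl (ZMod 2) (Fin 3 → E)).toLinearMap = LinearMap.id from rfl,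
          Submodule.map_id]
      · rw [show (LinearEquiv.refl (ZMod 2) (Fin 3 → E)).toLinearMap = LinearMap.id from rfl,
          Submodule.map_id, hsp']
      · rw [show (LinearEquiv.refl (ZMod 2) (Fin 3 → E)).toLinearMap = LinearMap.id from rfl,
          Submodule.map_id]
  -- Step 4: the final E-linear automorphism g₃
  set g₃ : (Fin 3 → E) ≃ₗ[ZMod 2] (Fin 3 → E) := hc.trans gE with hg₃
  have hlin₃ : ∀ (t : E) (v : Fin 3 → E), g₃ (t • v) = t • g₃ v := by
    intro t v
    show gE (hc (t • v)) = t • gE (hc v)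
    rw [hcLin, hlinE]
  have hmaps₃ : Set.MapsTo (Submodule.map g₃.toLinearMap)
      (pseudoHyperconic E) (pseudoHyperconic E) := by
    intro W hW
    rw [hg₃, map_trans]
    exact hmapsE (hcMaps hW)
  have hmap₃N : Submodule.map g₃.toLinearMap (Nm : Submodule (ZMod 2) (Fin 3 → E)) = Zm := by
    rw [hg₃, map_trans, hcN, hmapEN]
  have hmap₃Z : Submodule.map g₃.toLinearMap (Zm : Submodule (ZMod 2) (Fin 3 → E)) = Nm := by
    rw [hg₃, map_trans, hcZ, hτ]
  have inj₃ := Submodule.map_injective_of_injective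
    (f := g₃.toLinearMap) g₃.injective
  -- the images of the three basis members
  obtain ⟨β, hβ⟩ : ∃ β : E, β • ![0,0,1] = g₃ ![0,1,0] := by
    have h1 : (![0,1,0] : Fin 3 → E) ∈ Nm := by rw [mem_Nm]; exact ⟨1, by simp⟩
    have h2 : g₃ ![0,1,0] ∈ Submodule.map g₃.toLinearMap Nm := Submodule.mem_map_of_mem h1
    rw [hmap₃N, mem_Zm] at h2
    exact h2
  obtain ⟨δ, hδ⟩ : ∃ δ : E, δ • ![0,1,0] = g₃ ![0,0,1] := by
    have h1 : (![0,0,1] : Fin 3 → E) ∈ Zm := by rw [mem_Zm]; exact ⟨1, by simp⟩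
    have h2 : g₃ ![0,0,1] ∈ Submodule.map g₃.toLinearMap Zm := Submodule.mem_map_of_mem h1
    rw [hmap₃Z, mem_Nm] at h2
    exact h2
  set a : Fin 3 → E := g₃ ![1,0,0] with ha
  -- the conic quadratic form vanishes on the image of every conic member
  have hQ : ∀ t : E, (g₃ ![1,t,t^2]) 0 * (g₃ ![1,t,t^2]) 2 + ((g₃ ![1,t,t^2]) 1)^2 = 0 := by
    intro t
    have hmem : g₃ ![1,t,t^2] ∈ Submodule.map g₃.toLinearMap (Pm t) := by
      apply Submodule.mem_map_of_mem
      rw [mem_Pm]; exact ⟨1, by simp⟩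
    have hWO := hmaps₃ (Pm_mem_O t)
    rcases hWO with ⟨u, hu⟩ | hu | hu
    · have hu' : Submodule.map g₃.toLinearMap (Pm t) = Pm u := hu
      rw [hu', mem_Pm] at hmem
      rcases hmem with ⟨μ, hμ⟩
      have e0 := congrFun hμ 0
      have e1 := congrFun hμ 1
      have e2 := congrFun hμ 2
      simp at e0 e1 e2
      rw [← e0, ← e1, ← e2]
      linear_combination (μ^2 * u^2) * hch
    · have hu' : Submodule.map g₃.toLinearMap (Pm t) = Nm := hu
      exfalso
      exact hPZ t (inj₃ (hu'.trans hmap₃Z.symm))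
    · have hu' : Submodule.map g₃.toLinearMap (Pm t) = Zm := hu
      rw [hu', mem_Zm] at hmem
      rcases hmem with ⟨μ, hμ⟩
      have e0 := congrFun hμ 0
      have e1 := congrFun hμ 1
      simp at e0 e1
      rw [← e0, ← e1]
      ring
  -- decompose the image of the conic point
  have hdec : ∀ t : E, g₃ ![1,t,t^2] = a + t • (β • ![0,0,1]) + t^2 • (δ • ![0,1,0]) := by
    intro t
    have hv : (![1,t,t^2] : Fin 3 → E)
        = ![1,0,0] + t • ![0,1,0] + t^2 • ![0,0,1] := by
      apply vec_ext <;> simp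
    rw [hv, map_add, map_add, hlin₃, hlin₃, hβ, hδ, ha]
  have hK : ∀ t : E, (a 0 * a 2 + (a 1)^2) + (a 0 * β) * t + δ^2 * t^4 = 0 := by
    intro t
    have h := hQ t
    rw [hdec t] at h
    have c0 : ((a + t • (β • ![0,0,1]) + t^2 • (δ • ![0,1,0])) : Fin 3 → E) 0 = a 0 := by
      simp
      rfl
    have c1 : ((a + t • (β • ![0,0,1]) + t^2 • (δ • ![0,1,0])) : Fin 3 → E) 1 = a 1 + t^2 * δ := by
      simp
      rfl
    have c2 : ((a + t • (β • ![0,0,1]) + t^2 • (δ • ![0,1,0])) : Fin 3 → E) 2 = a 2 + t * β := by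
      simp
      rfl
    rw [c0, c1, c2] at h
    rw [CharTwo.add_sq] at h
    linear_combination h
  -- sum against t³ and use the power sums
  have hsum : δ ^ 2 = 0 := by
    have h1 : ∑ t : E, (t^3 * ((a 0 * a 2 + (a 1)^2) + (a 0 * β) * t + δ^2 * t^4)) = 0 := by
      rw [Finset.sum_congr rfl (fun t _ => by rw [hK t, mul_zero])]
      exact Finset.sum_const_zero
    have h2 : ∑ t : E, (t^3 * ((a 0 * a 2 + (a 1)^2) + (a 0 * β) * t + δ^2 * t^4))
        = (a 0 * a 2 + (a 1)^2) * (∑ t : E, t^3) + (a 0 * β) * (∑ t : E, t^4)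
          + δ^2 * (∑ t : E, t^7) := by
      rw [Finset.mul_sum, Finset.mul_sum, Finset.mul_sum, ← Finset.sum_add_distrib,
        ← Finset.sum_add_distrib]
      exact Finset.sum_congr rfl fun t _ => by ring
    rw [h2, sum_pow_three hE, sum_pow_four hE, sum_pow_seven hE] at h1
    linear_combination h1
  have hδ0 : δ = 0 := by
    exact sq_eq_zero_iff.mp hsum
  -- contradiction: g₃ kills the nonzero vector (0,0,1)
  have hz : g₃ ![0,0,1] = 0 := by rw [← hδ, hδ0, zero_smul]
  have : (![0,0,1] : Fin 3 → E) = 0 := by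
    apply g₃.injective
    rw [hz, map_zero]
  have := congrFun this 2
  simp at this
end

section
/- The alternating group on 18 letters has no subgroup of index 33 and no subgroup of index 66. -/
open Equiv Equiv.Perm Subgroup

theorem centralizer_eq_zpowers_of_order17 (x : Perm (Fin 18)) (hx : orderOf x = 17) :
    Subgroup.centralizer {x} = Subgroup.zpowers x := by
  have h17 : Nat.Prime 17 := by norm_num
  have hcyc : x.IsCycle := by
    apply isCycle_of_prime_order (hx ▸ h17)
    rw [hx]
    calc x.support.card ≤ 18 := le_of_le_of_eq (Finset.card_le_univ _) (by simp)
    _ < 2 * 17 := by norm_num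
  have hsupp : x.support.card = 17 := by rw [← hcyc.orderOf, hx]
  have hcompl : x.supportᶜ.card = 1 := by
    rw [Finset.card_compl, hsupp]; simp
  obtain ⟨a, ha⟩ := Finset.card_eq_one.mp hcompl
  have hafix : x a = a := by
    have : a ∈ x.supportᶜ := ha ▸ Finset.mem_singleton_self a
    simpa [Equiv.Perm.notMem_support] using Finset.mem_compl.mp this
  apply le_antisymm
  · intro c hc
    have hcomm : x * c = c * x :=
      Subgroup.mem_centralizer_iff.mp hc x (Set.mem_singleton x)
    have hcx : Commute c x := hcomm.symm
    have hptcomm : ∀ b, c (x b) = x (c b) := fun b => by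
      have := congrArg (fun σ : Perm (Fin 18) => σ b) hcomm.symm
      simpa using this
    have hzcomm : ∀ (j : ℤ) (b : Fin 18), c ((x ^ j) b) = (x ^ j) (c b) := fun j b => by
      have := congrArg (fun σ : Perm (Fin 18) => σ b) (hcx.zpow_right j).eq
      simpa using this
    obtain ⟨b₀, hb₀, hsame⟩ := hcyc
    have hcb₀ : x (c b₀) ≠ c b₀ := by
      rw [← hptcomm]
      exact fun h => hb₀ (c.injective h)
    obtain ⟨k, hk⟩ := hsame hcb₀
    refine Subgroup.mem_zpowers_iff.mpr ⟨k, ?_⟩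
    ext y
    by_cases hy : x y = y
    · have hya : y = a := by
        have : y ∈ x.supportᶜ := Finset.mem_compl.mpr (by simp [Equiv.Perm.mem_support, hy])
        rw [ha] at this; exact Finset.mem_singleton.mp this
      have hcy : x (c y) = c y := by rw [← hptcomm, hy]
      have hca : c y = a := by
        have : c y ∈ x.supportᶜ := Finset.mem_compl.mpr
          (by simp [Equiv.Perm.mem_support, hcy])
        rw [ha] at this; exact Finset.mem_singleton.mp this
      have hxk : (x ^ k) y = y := by
        subst hya
        exact zpow_apply_eq_self_of_apply_eq_self hafix k
      rw [hxk, hca, hya]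
    · obtain ⟨j, hj⟩ := hsame hy
      have h1 : c y = (x ^ j) (c b₀) := by rw [← hj, hzcomm]
      have h2 : c y = (x ^ k) y := by
        rw [h1, ← hk, ← Equiv.Perm.mul_apply, ← zpow_add, add_comm, zpow_add,
          Equiv.Perm.mul_apply, hj]
      rw [h2]
  · intro c hc
    obtain ⟨k, hk⟩ := Subgroup.mem_zpowers_iff.mp hc
    rw [Subgroup.mem_centralizer_iff]
    intro g hg
    have hg' : g = x := hg
    rw [hg', ← hk]
    exact ((Commute.refl x).zpow_right k).eq

theorem normalizer_card_dvd_272 (x : Perm (Fin 18)) (hx : orderOf x = 17) :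
    Nat.card (Subgroup.normalizer ((Subgroup.zpowers x : Subgroup (Perm (Fin 18))) : Set (Perm (Fin 18)))) ∣ 272 := by
  set Z := Subgroup.zpowers x with hZ
  have hcardZ : Nat.card Z = 17 := by rw [hZ, Nat.card_zpowers, hx]
  set N := Subgroup.normalizer (Z : Set (Perm (Fin 18))) with hN
  let f := Z.normalizerMonoidHom
  have h1 : Nat.card N = Nat.card (N ⧸ f.ker) * Nat.card f.ker :=
    Subgroup.card_eq_card_quotient_mul_card_subgroup f.ker
  have h2 : Nat.card (N ⧸ f.ker) = Nat.card f.range :=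
    Nat.card_congr (QuotientGroup.quotientKerEquivRange f).toEquiv
  haveI : Fact (Nat.Prime 17) := ⟨by norm_num⟩
  have h3 : Nat.card f.range ∣ 16 := by
    haveI : IsCyclic Z := isCyclic_of_prime_card (p := 17) hcardZ
    have : Nat.card f.range ∣ Nat.card (MulAut Z) := Subgroup.card_subgroup_dvd_card _
    rwa [IsCyclic.card_mulAut, hcardZ,
      Nat.totient_prime (by norm_num : Nat.Prime 17)] at this
  have h4 : Nat.card f.ker ∣ 17 := by
    rw [Subgroup.normalizerMonoidHom_ker]
    have hle : Subgroup.centralizer (Z : Set (Perm (Fin 18))) ≤ Z := by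
      exact le_trans
        (Subgroup.centralizer_le (Set.singleton_subset_iff.mpr (Subgroup.mem_zpowers x)))
        (le_of_eq (centralizer_eq_zpowers_of_order17 x hx))
    calc Nat.card ((Subgroup.centralizer (Z : Set (Perm (Fin 18)))).subgroupOf N)
        = Nat.card (((Subgroup.centralizer (Z : Set (Perm (Fin 18)))).subgroupOf N).map N.subtype) := by
          rw [Nat.card_congr (Subgroup.equivMapOfInjective _ _ N.subtype_injective).toEquiv]
      _ ∣ Nat.card Z := by
          apply Subgroup.card_dvd_of_le
          rw [Subgroup.subgroupOf_map_subtype]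
          exact inf_le_left.trans hle
      _ = 17 := hcardZ
  calc Nat.card N = Nat.card f.range * Nat.card f.ker := by rw [h1, h2]
    _ ∣ 16 * 17 := mul_dvd_mul h3 h4
    _ = 272 := by norm_num

theorem key (H : Subgroup (alternatingGroup (Fin 18)))
    (hidx : H.index = 33 ∨ H.index = 66) : False := by
  haveI : Fact (Nat.Prime 17) := ⟨by norm_num⟩
  have hG : Nat.card (alternatingGroup (Fin 18)) = 3201186852864000 := by
    have h2 : 2 * Fintype.card (alternatingGroup (Fin 18)) = Fintype.card (Perm (Fin 18)) :=
      two_mul_card_alternatingGroup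
    rw [Fintype.card_perm, Fintype.card_fin] at h2
    have h3 : (18).factorial = 6402373705728000 := by norm_num [Nat.factorial]
    rw [Nat.card_eq_fintype_card]
    omega
  have hH : Nat.card H = 97005662208000 ∨ Nat.card H = 48502831104000 := by
    have := H.card_mul_index
    rw [hG] at this
    rcases hidx with h | h <;> rw [h] at this <;> [left; right] <;> omega
  have hHcard : 17 ∣ Nat.card H ∧ ¬ (17 ^ 2 ∣ Nat.card H) := by
    rcases hH with h | h <;> rw [h] <;> constructor <;> norm_num
  obtain ⟨P⟩ : Nonempty (Sylow 17 H) := inferInstance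
  have hfact : (Nat.card H).factorization 17 = 1 := by
    have hn : Nat.card H ≠ 0 := by rcases hH with h | h <;> rw [h] <;> norm_num
    have hlow : 1 ≤ (Nat.card H).factorization 17 :=
      (Nat.Prime.pow_dvd_iff_le_factorization (by norm_num) hn).mp (by simpa using hHcard.1)
    have hhigh : ¬ 2 ≤ (Nat.card H).factorization 17 := fun h =>
      hHcard.2 ((Nat.Prime.pow_dvd_iff_le_factorization (by norm_num) hn).mpr h)
    omega
  have hPcard : Nat.card P = 17 := by
    rw [Sylow.card_eq_multiplicity, hfact, pow_one]
  set ι : H →* Perm (Fin 18) :=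
    ((alternatingGroup (Fin 18)).subtype).comp H.subtype with hι
  have hιinj : Function.Injective ι :=
    ((alternatingGroup (Fin 18)).subtype_injective).comp H.subtype_injective
  set Q : Subgroup (Perm (Fin 18)) := Subgroup.map ι (P : Subgroup H) with hQ
  have hQcard : Nat.card Q = 17 := by
    rw [hQ, ← Nat.card_congr (Subgroup.equivMapOfInjective _ ι hιinj).toEquiv, hPcard]
  haveI : IsCyclic Q := isCyclic_of_prime_card hQcard
  obtain ⟨⟨x, hxQ⟩, hgen⟩ := IsCyclic.exists_generator (α := Q)
  have hZQ : Subgroup.zpowers x = Q := by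
    apply le_antisymm ((Subgroup.zpowers_le).mpr hxQ)
    intro q hq
    obtain ⟨n, hn⟩ := hgen ⟨q, hq⟩
    exact Subgroup.mem_zpowers_iff.mpr ⟨n, congrArg Subtype.val hn⟩
  have hxord : orderOf x = 17 := by
    rw [← Nat.card_zpowers, hZQ, hQcard]
  set N : Subgroup H := Subgroup.normalizer (P : Set H) with hN
  set g : N →* Perm (Fin 18) := ι.comp N.subtype with hg
  have hginj : Function.Injective g := hιinj.comp N.subtype_injective
  have hmem : ∀ w : H, w ∈ N → ∀ b : Perm (Fin 18), b ∈ Q → ι w * b * (ι w)⁻¹ ∈ Q := by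
    intro w hw b hb
    obtain ⟨a, ha, rfl⟩ := hb
    rw [hN] at hw
    replace hw := (Subgroup.mem_normalizer_iff (H := (P : Subgroup H))).mp hw
    exact ⟨w * a * w⁻¹, (hw a).mp ha, by simp [map_mul, map_inv]⟩
  have hrange : g.range ≤ Subgroup.normalizer (Q : Set (Perm (Fin 18))) := by
    rintro - ⟨⟨w, hw⟩, rfl⟩
    rw [Subgroup.mem_normalizer_iff]
    intro b
    have hgw : g ⟨w, hw⟩ = ι w := rfl
    constructor
    · intro hb
      rw [hgw]
      exact hmem w hw b hb
    · intro hb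
      rw [hgw] at hb
      have h2 := hmem w⁻¹ (N.inv_mem hw) _ hb
      have h3 : ι w⁻¹ * (ι w * b * (ι w)⁻¹) * (ι w⁻¹)⁻¹ = b := by
        rw [map_inv]
        group
      rwa [h3] at h2
  have hmdvd : Nat.card N ∣ 272 := by
    have h1 : Nat.card N = Nat.card g.range :=
      Nat.card_congr (MonoidHom.ofInjective hginj).toEquiv
    have h2 : Nat.card g.range ∣ Nat.card (Subgroup.normalizer (Q : Set (Perm (Fin 18)))) := Subgroup.card_dvd_of_le hrange
    rw [← hZQ] at h2
    exact h1 ▸ h2.trans (normalizer_card_dvd_272 x hxord)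
  have hmn : Nat.card N * N.index = Nat.card H := N.card_mul_index
  have hn1 : N.index % 17 = 1 := by
    have hmod := card_sylow_modEq_one 17 H
    rw [Sylow.card_eq_index_normalizer P] at hmod
    simpa [Nat.ModEq] using hmod
  have hle : Nat.card N ≤ 272 := Nat.le_of_dvd (by norm_num) hmdvd
  rcases hH with h | h <;> rw [h] at hmn <;>
    interval_cases h : (Nat.card N) <;> omega

/-- **Lemma.** The alternating group on 18 letters has no subgroup of index 33
and no subgroup of index 66. -/
theorem alternatingGroup_18_no_subgroup_of_index_33_or_66 :
    ∀ H : Subgroup (alternatingGroup (Fin 18)), H.index ≠ 33 ∧ H.index ≠ 66 := by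
  intro H
  exact ⟨fun h => key H (Or.inl h), fun h => key H (Or.inr h)⟩
end
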